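/- arXiv:2101.08756 — 2 statements merged into one kernel-verified Lean document; each statement's English description precedes it below -/
import Mathlib

section
/- An ω-regular language L ⊆ Σ^ω is not DWW-recognizable if and only if there exist finite words x, x₂, x₄ ∈ Σ* and x₁, x₃ ∈ Σ⁺ such that, writing W = {x₁} ∪ {x₂·x₃ⁿ·x₄ : n ≥ 0}: x·W*·x₁^ω ⊆ L and x·W*·x₂·x₃^ω ∩ L = ∅. -/
structure DetAuto (α : Type) where
  Q : Type
  [fin : Fintype Q]
  init : Q
  δ : Q → α → Q

attribute [instance] DetAuto.fin

/-- The run of a deterministic automaton on an infinite word. -/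
def DetAuto.run {α : Type} (M : DetAuto α) (x : ℕ → α) : ℕ → M.Q
  | 0 => M.init
  | n + 1 => M.δ (M.run x n) (x n)

/-- Parity acceptance: the maximal color occurring infinitely often in the run is odd. -/
def ParityAccept {α : Type} (M : DetAuto α) (c : M.Q → ℕ) (x : ℕ → α) : Prop :=
  ∃ m, Odd m ∧ (∃ᶠ n in Filter.atTop, c (M.run x n) = m) ∧
    ∀ m', (∃ᶠ n in Filter.atTop, c (M.run x n) = m') → m' ≤ m

/-- A language is ω-regular iff it is recognized by some deterministic parity automaton. -/
def OmegaRegular {α : Type} (L : Set (ℕ → α)) : Prop :=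
  ∃ (M : DetAuto α) (c : M.Q → ℕ), ∀ x, x ∈ L ↔ ParityAccept M c x

/-- `u` is a prefix of the infinite word `w`. -/
def HasPrefixWord {α : Type} (w : ℕ → α) (u : List α) : Prop :=
  ∀ i : Fin u.length, w i.1 = u.get i

/-- The ω-language `x·W*·p·t^ω`. -/
def LangWStar {α : Type} (x : List α) (W : Set (List α)) (p t : List α) :
    Set (ℕ → α) :=
  { w | ∃ u : List (List α), (∀ z ∈ u, z ∈ W) ∧
        ∀ n, HasPrefixWord w (x ++ u.flatten ++ p ++ (List.replicate n t).flatten) }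

/-- `L` is recognizable by a deterministic weak automaton: every run is eventually
homogeneous w.r.t. `acc`, and acceptance is Büchi acceptance. -/
def DWWRecognizable {α : Type} (L : Set (ℕ → α)) : Prop :=
  ∃ (M : DetAuto α) (acc : Set M.Q),
    (∀ x : ℕ → α, (∀ᶠ n in Filter.atTop, M.run x n ∈ acc) ∨
      (∀ᶠ n in Filter.atTop, M.run x n ∉ acc)) ∧
    ∀ x, x ∈ L ↔ ∃ᶠ n in Filter.atTop, M.run x n ∈ acc

/-!
Let `M` be a parity automaton for `L` and call a state odd if it carries a nonempty loop whose
maximal colour is odd. If some reachable state carries an odd loop `u` and an even loop `v`, then a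
word `x` reaching it together with `x₁ = u`, `x₃ = v`, `x₂ = x₄ = []` is a witness. Otherwise all
loops at a reachable state have the same parity; since every state visited infinitely often by a
run carries a loop whose maximal colour is the maximal colour seen infinitely often, the run is
eventually inside or eventually outside the odd states, according to acceptance. So `M` with the
odd states as accepting set is a weak automaton for `L`.

Conversely, let `(M, acc)` be a weak automaton for `L` and choose `p`, reachable from the state
after `x` by a word of `W*`, which is maximal for `W*`-reachability. Reading `x₁^ω` from `p`
eventually stays in `acc`, and reading `x₂·x₃^ω` eventually stays outside; in both cases at block
boundaries from which `W*` leads back to `p`. States on a common loop of a weak automaton agree on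
membership in `acc`, so `p` would be both in and out of `acc`.
-/

open Filter

lemma hasPrefixWord_iff_take {α : Type} {w : Stream' α} {u : List α} :
    HasPrefixWord w u ↔ w.take u.length = u := by
  refine ⟨fun h => List.ext_getElem (by simp) fun i hi _ => ?_, fun h i => ?_⟩
  · rw [Stream'.take_get]; exact h ⟨i, by simpa using hi⟩
  · rw [List.get_eq_getElem, ← List.getElem_of_eq h (by simp), Stream'.take_get]; rfl

lemma HasPrefixWord.of_prefix {α : Type} {w : ℕ → α} {u v : List α} (h : HasPrefixWord w u)
    (hvu : v <+: u) : HasPrefixWord w v := fun i => by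
  rw [h ⟨i, by have := hvu.length_le; omega⟩]
  simp [hvu.getElem]

lemma Stream'.take_mul_length_cycle {α : Type} (t : List α) (ht : t ≠ []) (k : ℕ) :
    (Stream'.cycle t ht).take (k * t.length) = (List.replicate k t).flatten := by
  induction k with
  | zero => simp [Stream'.take_zero]
  | succ k ih =>
    rw [Stream'.cycle_eq, Nat.succ_mul, Nat.add_comm, ← Stream'.append_take,
      ih, List.replicate_succ, List.flatten_cons]

lemma hasPrefixWord_append_cycle {α : Type} (P t : List α) (ht : t ≠ []) (k : ℕ) :
    HasPrefixWord (P ++ₛ Stream'.cycle t ht) (P ++ (List.replicate k t).flatten) := by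
  rw [hasPrefixWord_iff_take]
  simp [← Stream'.take_mul_length_cycle t ht k, Stream'.append_take]

lemma Finite.exists_rel_maximal {β : Type} [Finite β] (R : β → β → Prop) [IsPreorder β R]
    (a : β) : ∃ b, R a b ∧ ∀ c, R b c → R c b := by
  let _ : Preorder β := { le := R, le_refl := refl_of R, le_trans := fun _ _ _ => trans_of R }
  obtain ⟨b, hab, hb⟩ := Finite.exists_le_maximal (p := fun _ => True) (a := a) trivial
  exact ⟨b, hab, fun c hbc => hb.2 trivial hbc⟩

namespace DetAuto

variable {α : Type} (M : DetAuto α)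

def steps (q : M.Q) (u : List α) : M.Q := u.foldl M.δ q

@[simp] lemma steps_nil (q : M.Q) : M.steps q [] = q := rfl

@[simp] lemma steps_append (q : M.Q) (u v : List α) :
    M.steps q (u ++ v) = M.steps (M.steps q u) v := List.foldl_append ..

lemma steps_flatten_of_forall_loop {q : M.Q} {zs : List (List α)}
    (h : ∀ z ∈ zs, M.steps q z = q) : M.steps q zs.flatten = q := by
  induction zs with
  | nil => rfl
  | cons _ _ ih => simp_all

lemma steps_flatten_replicate_of_loop {q : M.Q} {t : List α} (h : M.steps q t = q) (k : ℕ) :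
    M.steps q (List.replicate k t).flatten = q :=
  M.steps_flatten_of_forall_loop fun _ hz => List.eq_of_mem_replicate hz ▸ h

lemma run_add (w : Stream' α) (n k : ℕ) :
    M.run w (n + k) = M.steps (M.run w n) ((w.drop n).take k) := by
  induction k with
  | zero => rfl
  | succ k ih =>
    rw [Stream'.take_succ', steps_append, ← ih, Stream'.get_drop]
    rfl

lemma run_eq_steps_take (w : Stream' α) (n : ℕ) : M.run w n = M.steps M.init (w.take n) := by
  have := M.run_add w 0 n
  rwa [Nat.zero_add, Stream'.drop_zero] at this

lemma run_length_of_hasPrefixWord {w : Stream' α} {u : List α} (h : HasPrefixWord w u) :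
    M.run w u.length = M.steps M.init u := by
  rw [run_eq_steps_take, hasPrefixWord_iff_take.1 h]

lemma run_eq_of_loop {w : Stream' α} {P t t' : List α} {q : M.Q}
    (hw : ∀ k, HasPrefixWord w (P ++ (List.replicate k t).flatten))
    (hP : M.steps M.init P = q) (ht : M.steps q t = q) (ht' : t' <+: t) (k : ℕ) :
    M.run w (P.length + k * t.length + t'.length) = M.steps q t' := by
  have hpre :
      P ++ (List.replicate k t).flatten ++ t' <+: P ++ (List.replicate (k + 1) t).flatten := by
    simpa [List.replicate_succ', List.append_assoc] using ht'
  have := M.run_length_of_hasPrefixWord ((hw (k + 1)).of_prefix hpre)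
  simp_all [M.steps_flatten_replicate_of_loop ht, Nat.add_assoc]

open Classical in
noncomputable def infOften (w : Stream' α) : Finset M.Q :=
  Finset.univ.filter fun q => ∃ᶠ n in atTop, M.run w n = q

lemma mem_infOften {w : Stream' α} {q : M.Q} :
    q ∈ M.infOften w ↔ ∃ᶠ n in atTop, M.run w n = q := by
  simp [infOften]

lemma eventually_mem_infOften (w : Stream' α) : ∀ᶠ n in atTop, M.run w n ∈ M.infOften w := by
  have : ∀ q, ∀ᶠ n in atTop, M.run w n = q → q ∈ M.infOften w := fun q => by
    by_cases hq : q ∈ M.infOften w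
    · exact Eventually.of_forall fun _ _ => hq
    · exact (not_frequently.1 (mt M.mem_infOften.2 hq)).mono fun _ hn h => absurd h hn
  filter_upwards [eventually_all.2 this] with n hn using hn _ rfl

lemma infOften_nonempty (w : Stream' α) : (M.infOften w).Nonempty :=
  let ⟨_, h⟩ := (M.eventually_mem_infOften w).exists
  ⟨_, h⟩

noncomputable def maxInfColor (c : M.Q → ℕ) (w : Stream' α) : ℕ := (M.infOften w).sup c

lemma frequently_color_eq_iff {c : M.Q → ℕ} {w : Stream' α} {m : ℕ} :
    (∃ᶠ n in atTop, c (M.run w n) = m) ↔ ∃ q ∈ M.infOften w, c q = m := by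
  constructor
  · intro h
    obtain ⟨n, hm, hn⟩ := (h.and_eventually (M.eventually_mem_infOften w)).exists
    exact ⟨_, hn, hm⟩
  · rintro ⟨q, hq, rfl⟩
    exact (M.mem_infOften.1 hq).mono fun n hn => by rw [hn]

lemma parityAccept_iff_odd_maxInfColor {c : M.Q → ℕ} {w : Stream' α} :
    ParityAccept M c w ↔ Odd (M.maxInfColor c w) := by
  simp only [ParityAccept, frequently_color_eq_iff]
  constructor
  · rintro ⟨m, hodd, ⟨q, hq, rfl⟩, hmax⟩
    have : M.maxInfColor c w = c q :=
      le_antisymm (Finset.sup_le fun q' hq' => hmax _ ⟨q', hq', rfl⟩) (Finset.le_sup hq)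
    rwa [this]
  · intro h
    obtain ⟨q, hq, hqm⟩ := Finset.exists_mem_eq_sup _ (M.infOften_nonempty w) c
    exact ⟨_, h, ⟨q, hq, hqm.symm⟩, fun m' ⟨q', hq', hm'⟩ => hm' ▸ Finset.le_sup hq'⟩

def loopMax (c : M.Q → ℕ) (q : M.Q) (t : List α) : ℕ :=
  (Finset.range t.length).sup fun i => c (M.steps q (t.take i))

lemma loopMax_run (c : M.Q → ℕ) (w : Stream' α) (n k : ℕ) :
    M.loopMax c (M.run w n) ((w.drop n).take k) =
      (Finset.range k).sup fun i => c (M.run w (n + i)) := by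
  simp only [loopMax, Stream'.length_take]
  refine Finset.sup_congr rfl fun i hi => ?_
  rw [Stream'.take_take, min_eq_right (Finset.mem_range.1 hi).le, ← run_add]

lemma exists_loop_loopMax_eq (c : M.Q → ℕ) {w : Stream' α} {q : M.Q} (hq : q ∈ M.infOften w) :
    ∃ U ≠ [], M.steps q U = q ∧ M.loopMax c q U = M.maxInfColor c w := by
  obtain ⟨N, hN⟩ := eventually_atTop.1 (M.eventually_mem_infOften w)
  obtain ⟨q', hq', hcq'⟩ := Finset.exists_mem_eq_sup _ (M.infOften_nonempty w) c
  have hfreq := M.mem_infOften.1 hq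
  obtain ⟨n₀, hn₀, hrun₀⟩ := frequently_atTop.1 hfreq N
  obtain ⟨n₁, hn₁, hrun₁⟩ := frequently_atTop.1 (M.mem_infOften.1 hq') n₀
  obtain ⟨n₂, hn₂, hrun₂⟩ := frequently_atTop.1 hfreq (n₁ + 1)
  refine ⟨(w.drop n₀).take (n₂ - n₀), List.ne_nil_of_length_pos (by simp; omega), ?_, ?_⟩
  · rw [← hrun₀, ← run_add, Nat.add_sub_cancel' (by omega), hrun₂, hrun₀]
  · rw [← hrun₀, loopMax_run]
    apply le_antisymm
    · exact Finset.sup_le fun i _ => Finset.le_sup (hN _ (by omega))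
    · rw [maxInfColor, hcq', ← hrun₁]
      refine Finset.le_sup_of_le (b := n₁ - n₀) (Finset.mem_range.2 (by omega)) ?_
      rw [Nat.add_sub_cancel' hn₁]

lemma maxInfColor_eq_loopMax (c : M.Q → ℕ) {w : Stream' α} {P t : List α} {q : M.Q}
    (hw : ∀ k, HasPrefixWord w (P ++ (List.replicate k t).flatten))
    (hP : M.steps M.init P = q) (ht : M.steps q t = q) (hne : t ≠ []) :
    M.maxInfColor c w = M.loopMax c q t := by
  have htpos := List.length_pos_iff.2 hne
  have hrun : ∀ k i, i < t.length →
      M.run w (P.length + k * t.length + i) = M.steps q (t.take i) := fun k i hi => by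
    simpa [hi.le] using M.run_eq_of_loop hw hP ht (List.take_prefix i t) k
  apply le_antisymm
  · refine Finset.sup_le fun q' hq' => ?_
    obtain ⟨n, hn, rfl⟩ := frequently_atTop.1 (M.mem_infOften.1 hq') P.length
    have hdecomp : n = P.length + (n - P.length) / t.length * t.length +
        (n - P.length) % t.length := by
      have := Nat.div_add_mod' (n - P.length) t.length
      omega
    have hmod := Nat.mod_lt (n - P.length) htpos
    rw [hdecomp, hrun _ _ hmod]
    exact Finset.le_sup (f := fun i => c (M.steps q (t.take i))) (Finset.mem_range.2 hmod)
  · refine Finset.sup_le fun i hi => Finset.le_sup (M.mem_infOften.2 ?_)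
    have hi := Finset.mem_range.1 hi
    refine frequently_atTop.2 fun N => ⟨P.length + N * t.length + i, ?_, hrun N i hi⟩
    have : N ≤ N * t.length := Nat.le_mul_of_pos_right N htpos
    omega

theorem parityAccept_iff_of_mem_langWStar (c : M.Q → ℕ) {x p t : List α} {W : Set (List α)}
    {q q' : M.Q} (hx : M.steps M.init x = q) (hW : ∀ z ∈ W, M.steps q z = q)
    (hp : M.steps q p = q') (ht : M.steps q' t = q') (hne : t ≠ []) {w : Stream' α}
    (hw : w ∈ LangWStar x W p t) : ParityAccept M c w ↔ Odd (M.loopMax c q' t) := by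
  obtain ⟨u, hu, hpre⟩ := hw
  rw [parityAccept_iff_odd_maxInfColor, M.maxInfColor_eq_loopMax c hpre _ ht hne]
  simp [hx, M.steps_flatten_of_forall_loop fun z hz => hW z (hu z hz), hp]

def oddLoopStates (c : M.Q → ℕ) : Set M.Q :=
  {q | ∃ u ≠ [], M.steps q u = q ∧ Odd (M.loopMax c q u)}

theorem dwwRecognizable_of_forall_odd_loop (c : M.Q → ℕ) {L : Set (ℕ → α)}
    (hL : ∀ w, w ∈ L ↔ ParityAccept M c w)
    (H : ∀ (P u : List α) (q : M.Q), M.steps M.init P = q → u ≠ [] → M.steps q u = q →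
      q ∈ M.oddLoopStates c → Odd (M.loopMax c q u)) :
    DWWRecognizable L := by
  have key : ∀ {w : Stream' α} {q}, q ∈ M.infOften w →
      (q ∈ M.oddLoopStates c ↔ Odd (M.maxInfColor c w)) := fun {w q} hq => by
    obtain ⟨n, hn⟩ := (M.mem_infOften.1 hq).exists
    obtain ⟨U, hU, hloop, hmax⟩ := M.exists_loop_loopMax_eq c hq
    exact ⟨fun hodd => hmax ▸ H _ U q (hn ▸ (M.run_eq_steps_take w n).symm) hU hloop hodd,
      fun hodd => ⟨U, hU, hloop, hmax ▸ hodd⟩⟩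
  refine ⟨M, M.oddLoopStates c, fun w => ?_, fun w => ?_⟩
  · by_cases hodd : Odd (M.maxInfColor c w)
    · exact Or.inl ((M.eventually_mem_infOften w).mono fun n hn => (key hn).2 hodd)
    · exact Or.inr ((M.eventually_mem_infOften w).mono fun n hn h => hodd ((key hn).1 h))
  · refine (hL w).trans (M.parityAccept_iff_odd_maxInfColor.trans ⟨?_, ?_⟩)
    · intro hodd
      obtain ⟨q, hq⟩ := M.infOften_nonempty w
      exact (M.mem_infOften.1 hq).mono fun n hn => hn ▸ (key hq).2 hodd
    · intro hfreq
      obtain ⟨n, hodd, hn⟩ := (hfreq.and_eventually (M.eventually_mem_infOften w)).exists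
      exact (key hn).1 hodd

lemma exists_steps_pow_mem {S : Set M.Q} {P t : List α} (ht : t ≠ [])
    (h : ∀ᶠ n in atTop, M.run (P ++ₛ Stream'.cycle t ht) n ∈ S) :
    ∃ j, M.steps M.init (P ++ (List.replicate j t).flatten) ∈ S := by
  obtain ⟨N, hN⟩ := eventually_atTop.1 h
  refine ⟨N, ?_⟩
  rw [← M.run_length_of_hasPrefixWord (hasPrefixWord_append_cycle P t ht N)]
  have : N ≤ N * t.length := Nat.le_mul_of_pos_right N (List.length_pos_iff.2 ht)
  exact hN _ (by simp; omega)

lemma steps_mem_iff_of_loop {S : Set M.Q}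
    (hhom : ∀ w : ℕ → α, (∀ᶠ n in atTop, M.run w n ∈ S) ∨ (∀ᶠ n in atTop, M.run w n ∉ S))
    {P z z' : List α} {q : M.Q} (hP : M.steps M.init P = q) (hz : M.steps q z = q)
    (hz' : z' <+: z) : M.steps q z' ∈ S ↔ q ∈ S := by
  rcases eq_or_ne z [] with rfl | hne
  · rw [List.prefix_nil.1 hz', steps_nil]
  set w := P ++ₛ Stream'.cycle z hne
  have hw := hasPrefixWord_append_cycle P z hne
  have hstates : ∀ N, ∃ n ≥ N, ∃ n' ≥ N, M.run w n = M.steps q z' ∧ M.run w n' = q := by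
    intro N
    have : N ≤ N * z.length := Nat.le_mul_of_pos_right N (List.length_pos_iff.2 hne)
    refine ⟨_, ?_, P.length + N * z.length + ([] : List α).length, ?_,
      M.run_eq_of_loop hw hP hz hz' N, M.run_eq_of_loop hw hP hz List.nil_prefix N⟩ <;>
      simp <;> omega
  rcases hhom w with h | h <;> obtain ⟨N, hN⟩ := eventually_atTop.1 h <;>
    obtain ⟨n, hn, n', hn', h₁, h₂⟩ := hstates N
  · exact iff_of_true (h₁ ▸ hN n hn) (h₂ ▸ hN n' hn')
  · exact iff_of_false (h₁ ▸ hN n hn) (h₂ ▸ hN n' hn')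

def StarReach (W : Set (List α)) (q q' : M.Q) : Prop :=
  ∃ ys : List (List α), (∀ z ∈ ys, z ∈ W) ∧ M.steps q ys.flatten = q'

instance (W : Set (List α)) : IsPreorder M.Q (M.StarReach W) where
  refl q := ⟨[], by simp, rfl⟩
  trans _ _ _ := fun ⟨ys, hys, h⟩ ⟨ys', hys', h'⟩ =>
    ⟨ys ++ ys', by simp only [List.mem_append]; grind, by simp [h, h']⟩

end DetAuto

theorem not_dwwRecognizable_of_pattern {α : Type} {L : Set (ℕ → α)} {W : Set (List α)}
    {x x₁ x₂ x₃ x₄ : List α} (hx₁ : x₁ ∈ W)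
    (hx₂₃₄ : ∀ n, x₂ ++ (List.replicate n x₃).flatten ++ x₄ ∈ W) (h₁ : x₁ ≠ []) (h₃ : x₃ ≠ [])
    (hsub : LangWStar x W [] x₁ ⊆ L) (hdis : LangWStar x W x₂ x₃ ∩ L = ∅) :
    ¬ DWWRecognizable L := by
  rintro ⟨M, acc, hhom, hL⟩
  obtain ⟨p, ⟨ys, hys, hp⟩, hback⟩ :=
    Finite.exists_rel_maximal (M.StarReach W) (M.steps M.init x)
  set P := x ++ ys.flatten
  have hP : M.steps M.init P = p := by simp [P, hp]
  have hacc : p ∈ acc := by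
    have hw : P ++ₛ Stream'.cycle x₁ h₁ ∈ LangWStar x W [] x₁ :=
      ⟨ys, hys, fun k => by simpa [P] using hasPrefixWord_append_cycle P x₁ h₁ k⟩
    have hev := (hhom _).resolve_right fun h => not_frequently.2 h ((hL _).1 (hsub hw))
    obtain ⟨j, hj⟩ := M.exists_steps_pow_mem h₁ hev
    rw [DetAuto.steps_append, hP] at hj
    obtain ⟨ys', -, hys'⟩ :=
      hback _ ⟨List.replicate j x₁, by simp [List.mem_replicate]; grind, rfl⟩
    exact (M.steps_mem_iff_of_loop hhom hP (by rw [DetAuto.steps_append, hys'])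
      (List.prefix_append _ ys'.flatten)).1 hj
  have hrej : p ∉ acc := by
    have hw : (P ++ x₂) ++ₛ Stream'.cycle x₃ h₃ ∈ LangWStar x W x₂ x₃ :=
      ⟨ys, hys, fun k => by simpa [P] using hasPrefixWord_append_cycle (P ++ x₂) x₃ h₃ k⟩
    have hev : ∀ᶠ n in atTop, M.run ((P ++ x₂) ++ₛ Stream'.cycle x₃ h₃) n ∈ accᶜ :=
      not_frequently.1 fun h => Set.eq_empty_iff_forall_notMem.1 hdis _ ⟨hw, (hL _).2 h⟩
    obtain ⟨j, hj⟩ := M.exists_steps_pow_mem h₃ hev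
    obtain ⟨ys', -, hys'⟩ := hback _ ⟨[x₂ ++ (List.replicate j x₃).flatten ++ x₄],
      by simpa using hx₂₃₄ j, rfl⟩
    intro hpacc
    refine hj ?_
    have := (M.steps_mem_iff_of_loop hhom hP (z := x₂ ++ (List.replicate j x₃).flatten ++ x₄ ++
      ys'.flatten) (z' := x₂ ++ (List.replicate j x₃).flatten) (by simpa using hys')
      (by simp)).2 hpacc
    simpa [hP] using this
  exact hrej hacc

theorem stmt_17_general {Sig : Type} (L : Set (ℕ → Sig)) (hL : OmegaRegular L) :
    ¬ DWWRecognizable L ↔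
      ∃ x x₂ x₄ x₁ x₃ : List Sig, x₁ ≠ [] ∧ x₃ ≠ [] ∧
        LangWStar x
          (insert x₁ {u | ∃ n : ℕ, u = x₂ ++ (List.replicate n x₃).flatten ++ x₄})
          [] x₁ ⊆ L ∧
        LangWStar x
          (insert x₁ {u | ∃ n : ℕ, u = x₂ ++ (List.replicate n x₃).flatten ++ x₄})
          x₂ x₃ ∩ L = ∅ := by
  obtain ⟨M, c, hM⟩ := hL
  refine ⟨fun hnot => ?_, fun ⟨x, x₂, x₄, x₁, x₃, h₁, h₃, hsub, hdis⟩ =>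
    not_dwwRecognizable_of_pattern (Set.mem_insert _ _)
      (fun n => Set.mem_insert_of_mem _ (by exact ⟨n, rfl⟩)) h₁ h₃ hsub hdis⟩
  by_contra hpat
  refine hnot (M.dwwRecognizable_of_forall_odd_loop c hM fun P v q hP hv hvq hq => ?_)
  obtain ⟨u, hu, huq, hodd⟩ := hq
  by_contra hv_odd
  have hW : ∀ z ∈ insert u {z | ∃ n : ℕ, z = [] ++ (List.replicate n v).flatten ++ []},
      M.steps q z = q := by
    rintro z (rfl | ⟨n, rfl⟩)
    · exact huq
    · simpa using M.steps_flatten_replicate_of_loop hvq n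
  refine hpat ⟨P, [], [], u, v, hu, hv, fun w hw => (hM w).2 ?_, ?_⟩
  · exact (M.parityAccept_iff_of_mem_langWStar c hP hW (M.steps_nil q) huq hu hw).2 hodd
  · exact Set.eq_empty_of_forall_notMem fun w ⟨hw, hwL⟩ =>
      hv_odd ((M.parityAccept_iff_of_mem_langWStar c hP hW (M.steps_nil q) hvq hv hw).1
        ((hM w).1 hwL))

/-- An ω-regular `L` is not DWW-recognizable iff there are words
`x, x₂, x₄ ∈ Σ*`, `x₁, x₃ ∈ Σ⁺` such that, with `W = {x₁} ∪ {x₂·x₃ⁿ·x₄ : n ≥ 0}`,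
`x·W*·x₁^ω ⊆ L` and `x·W*·x₂·x₃^ω ∩ L = ∅`. -/
theorem stmt_17 {Sig : Type} [Fintype Sig] (L : Set (ℕ → Sig)) (hL : OmegaRegular L) :
    ¬ DWWRecognizable L ↔
      ∃ x x₂ x₄ x₁ x₃ : List Sig, x₁ ≠ [] ∧ x₃ ≠ [] ∧
        LangWStar x
          (insert x₁ {u | ∃ n : ℕ, u = x₂ ++ (List.replicate n x₃).flatten ++ x₄})
          [] x₁ ⊆ L ∧
        LangWStar x
          (insert x₁ {u | ∃ n : ℕ, u = x₂ ++ (List.replicate n x₃).flatten ++ x₄})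
          x₂ x₃ ∩ L = ∅ :=
  stmt_17_general L hL
end

section
/- Let A be a deterministic parity automaton over Σ with state set Q, initial state q₀, transition function δ, and coloring c. Then L(A) is DBW-recognizable if and only if for every strongly connected set C of A that is reachable from q₀ and accepting (i.e., max{c(q) : q ∈ C} is odd), and for every strongly connected set C' of A with C ⊆ C', the set C' is accepting. -/
/-- A language is DBW-recognizable iff some deterministic Büchi automaton recognizes it. -/
def DBWRecognizable {α : Type} (L : Set (ℕ → α)) : Prop :=
  ∃ (M : DetAuto α) (acc : Set M.Q), ∀ x, x ∈ L ↔ ∃ᶠ n in Filter.atTop, M.run x n ∈ acc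

/-- The extension δ* of the transition function to finite words. -/
def DetAuto.runOn {α : Type} (M : DetAuto α) (q : M.Q) (u : List α) : M.Q :=
  u.foldl M.δ q

/-- `C` is a strongly connected set: it is nonempty and between any two of its states
there is a nonempty path staying inside `C`. -/
def IsSCS {α : Type} (M : DetAuto α) (C : Set M.Q) : Prop :=
  C.Nonempty ∧ ∀ q ∈ C, ∀ q' ∈ C, ∃ u : List α, u ≠ [] ∧ M.runOn q u = q' ∧
    ∀ p : List α, p <+: u → M.runOn q p ∈ C

/-- The SCS `C` is accepting: the maximal color in `C` is odd. -/
def AcceptingSCS {α : Type} (M : DetAuto α) (c : M.Q → ℕ) (C : Set M.Q) : Prop :=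
  ∃ q ∈ C, Odd (c q) ∧ ∀ q' ∈ C, c q' ≤ c q

/-!
(⇐) Read `M` as a Büchi automaton accepting in the states all of whose reachable SCSs are
accepting. The states a run visits infinitely often form a reachable SCS `I`. If `I` is accepting
with maximum `q`, every reachable SCS `D ∋ q` sits with `I` inside the SCS `D ∪ I`, which is
accepting by hypothesis, so `D` is accepting and the Büchi run visits `q` infinitely often; the
converse is immediate.

(⇒) Let a deterministic Büchi automaton `N` recognize `L(M)`, and suppose the maximal color of
`C' ⊇ C`, attained at `q'`, is even. From a word reaching the odd maximum `qc` of `C`, looping in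
`C` forever is parity-accepting, so `N` meets an accepting state on the way; detour from there
through `q'` inside `C'` back to `qc`. Pigeonholing on the state of `N` at `qc` yields a word `w`
looping on both automata along which `N` meets an accepting state while `M` stays in `C'` and
passes `q'`; the lasso `g w^ω` is then accepted by `N` and rejected by `M`.
-/

open Filter Set

theorem exists_rel_self_of_forall_exists_rel {β : Type*} [Finite β] {R : β → β → Prop}
    (hR : ∀ a b c, R a b → R b c → R a c) {P : Set β} (hP : P.Nonempty)
    (hstep : ∀ b ∈ P, ∃ b' ∈ P, R b b') : ∃ b ∈ P, R b b := by
  by_contra! hirr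
  let R' : β → β → Prop := fun b' b => b ∈ P ∧ b' ∈ P ∧ R b b'
  have : IsTrans β R' :=
    ⟨fun _ _ _ ⟨_, ha, hba⟩ ⟨hc, _, hcb⟩ => ⟨hc, ha, hR _ _ _ hcb hba⟩⟩
  have : Std.Irrefl R' := ⟨fun b ⟨hb, _, hbb⟩ => hirr b hb hbb⟩
  obtain ⟨b, hb, hmin⟩ := (Finite.wellFounded_of_trans_of_irrefl R').has_min P hP
  obtain ⟨b', hb', hbb'⟩ := hstep b hb
  exact hmin b' hb' ⟨hb, hb', hbb'⟩

namespace DetAuto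

variable {α : Type} (M : DetAuto α)

theorem runOn_append (q : M.Q) (u v : List α) :
    M.runOn q (u ++ v) = M.runOn (M.runOn q u) v :=
  List.foldl_append ..

theorem run_eq_runOn_take (x : Stream' α) (n : ℕ) : M.run x n = M.runOn M.init (x.take n) := by
  induction n with
  | zero => rfl
  | succ n ih => rw [← Stream'.concat_take_get, runOn_append, ← ih]; rfl

theorem run_add_s19 (x : Stream' α) (n m : ℕ) :
    M.run x (n + m) = M.runOn (M.run x n) ((x.drop n).take m) := by
  rw [run_eq_runOn_take, run_eq_runOn_take, Stream'.take_add, runOn_append]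

theorem run_appendStream (u : List α) (s : Stream' α) (n : ℕ) :
    M.run (u ++ₛ s) (u.length + n) = M.runOn (M.runOn M.init u) (s.take n) := by
  rw [run_eq_runOn_take, ← Stream'.append_take, runOn_append]

theorem runOn_take_cycle {q : M.Q} {w : List α} (hw : w ≠ []) (hloop : M.runOn q w = q)
    (n : ℕ) : M.runOn q ((Stream'.cycle w hw).take n) = M.runOn q (w.take (n % w.length)) := by
  have hwpos : 0 < w.length := List.length_pos_iff.2 hw
  induction n using Nat.strong_induction_on with
  | _ n ih =>
    rcases lt_or_ge n w.length with hn | hn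
    · rw [Stream'.cycle_eq, Stream'.take_append_of_le_length _ _ _ hn.le, Nat.mod_eq_of_lt hn]
    · obtain ⟨m, rfl⟩ := Nat.exists_eq_add_of_le hn
      rw [Stream'.cycle_eq, ← Stream'.append_take, runOn_append, hloop, ih m (by omega),
        Nat.add_mod_left]

def PathWithin (q : M.Q) (w : List α) (S : Set M.Q) : Prop :=
  ∀ p, p <+: w → M.runOn q p ∈ S

def PathVisits (q : M.Q) (w : List α) (S : Set M.Q) : Prop :=
  ∃ p, p <+: w ∧ M.runOn q p ∈ S

variable {M}

theorem PathWithin.mono {q : M.Q} {w : List α} {S T : Set M.Q} (h : M.PathWithin q w S)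
    (hST : S ⊆ T) : M.PathWithin q w T :=
  fun p hp => hST (h p hp)

theorem PathWithin.append {q : M.Q} {u v : List α} {S : Set M.Q} (hu : M.PathWithin q u S)
    (hv : M.PathWithin (M.runOn q u) v S) : M.PathWithin q (u ++ v) S := by
  rintro p ⟨t, ht⟩
  rcases List.append_eq_append_iff.1 ht with ⟨a, rfl, -⟩ | ⟨b, rfl, rfl⟩
  · exact hu p (List.prefix_append p a)
  · rw [runOn_append]
    exact hv b (List.prefix_append b t)

theorem PathVisits.append_right {q : M.Q} {u : List α} {S : Set M.Q} (h : M.PathVisits q u S)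
    (v : List α) : M.PathVisits q (u ++ v) S :=
  let ⟨p, hp, hpS⟩ := h
  ⟨p, hp.trans (List.prefix_append u v), hpS⟩

theorem PathVisits.append_left {q : M.Q} {v : List α} {S : Set M.Q} (u : List α)
    (h : M.PathVisits (M.runOn q u) v S) : M.PathVisits q (u ++ v) S :=
  let ⟨p, hp, hpS⟩ := h
  ⟨u ++ p, (List.prefix_append_right_inj u).2 hp, by rwa [runOn_append]⟩

theorem pathWithin_take {q : M.Q} {s : Stream' α} {m : ℕ} {S : Set M.Q}
    (h : ∀ j ≤ m, M.runOn q (s.take j) ∈ S) : M.PathWithin q (s.take m) S := by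
  intro p hp
  rw [List.prefix_iff_eq_take.1 hp, Stream'.take_take]
  exact h _ (min_le_left _ _)

theorem PathWithin.take_cycle {q : M.Q} {w : List α} {S : Set M.Q} (hw : w ≠ [])
    (hloop : M.runOn q w = q) (h : M.PathWithin q w S) (m : ℕ) :
    M.PathWithin q ((Stream'.cycle w hw).take m) S :=
  pathWithin_take fun j _ => by
    rw [runOn_take_cycle M hw hloop]
    exact h _ (List.take_prefix _ _)

section Lasso

variable {u w : List α} (hw : w ≠ []) (hloop : M.runOn (M.runOn M.init u) w = M.runOn M.init u)
include hw hloop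

theorem eventually_run_lasso_mem {S : Set M.Q} (h : M.PathWithin (M.runOn M.init u) w S) :
    ∀ᶠ n in atTop, M.run (u ++ₛ Stream'.cycle w hw) n ∈ S := by
  refine eventually_atTop.2 ⟨u.length, fun n hn => ?_⟩
  obtain ⟨m, rfl⟩ := Nat.exists_eq_add_of_le hn
  rw [run_appendStream]
  exact h.take_cycle hw hloop m _ (List.prefix_refl _)

theorem frequently_run_lasso_mem {S : Set M.Q} (h : M.PathVisits (M.runOn M.init u) w S) :
    ∃ᶠ n in atTop, M.run (u ++ₛ Stream'.cycle w hw) n ∈ S := by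
  have hwpos : 0 < w.length := List.length_pos_iff.2 hw
  obtain ⟨p, hp, hlt, hpS⟩ :
      ∃ p, p <+: w ∧ p.length < w.length ∧ M.runOn (M.runOn M.init u) p ∈ S := by
    obtain ⟨p, hp, hpS⟩ := h
    rcases hp.length_le.lt_or_eq with hlt | heq
    · exact ⟨p, hp, hlt, hpS⟩
    · exact ⟨[], List.nil_prefix, hwpos, by rwa [hp.eq_of_length heq, hloop] at hpS⟩
  refine frequently_atTop.2 fun a => ⟨u.length + (w.length * a + p.length), by nlinarith, ?_⟩
  rw [run_appendStream, runOn_take_cycle M hw hloop, Nat.mul_add_mod, Nat.mod_eq_of_lt hlt,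
    ← List.prefix_iff_eq_take.1 hp]
  exact hpS

end Lasso

variable (M)

theorem parityAccept_iff_of_eventually_mem (c : M.Q → ℕ) {x : Stream' α} {D : Set M.Q}
    {q : M.Q} (hD : ∀ᶠ n in atTop, M.run x n ∈ D) (hqD : ∀ q' ∈ D, c q' ≤ c q)
    (hq : ∃ᶠ n in atTop, M.run x n = q) : ParityAccept M c x ↔ Odd (c q) := by
  have hle : ∀ m, (∃ᶠ n in atTop, c (M.run x n) = m) → m ≤ c q := fun m hm =>
    let ⟨_, hm, hnD⟩ := (hm.and_eventually hD).exists
    hm ▸ hqD _ hnD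
  have hfreq : ∃ᶠ n in atTop, c (M.run x n) = c q := hq.mono fun n hn => by rw [hn]
  exact ⟨fun ⟨m, hm, hfm, hge⟩ => le_antisymm (hle m hfm) (hge _ hfreq) ▸ hm,
    fun hodd => ⟨c q, hodd, hfreq, hle⟩⟩

def infSet (x : Stream' α) : Set M.Q := {q | ∃ᶠ n in atTop, M.run x n = q}

theorem eventually_mem_infSet (x : Stream' α) : ∀ᶠ n in atTop, M.run x n ∈ M.infSet x := by
  have : ∀ q, ∀ᶠ n in atTop, M.run x n = q → q ∈ M.infSet x := fun q => by
    by_cases hq : q ∈ M.infSet x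
    · exact Eventually.of_forall fun _ _ => hq
    · exact (not_frequently.1 hq).mono fun _ hn heq => (hn heq).elim
  exact (eventually_all.2 this).mono fun n hn => hn _ rfl

theorem exists_runOn_mem_infSet (x : Stream' α) : ∃ v, M.runOn M.init v ∈ M.infSet x :=
  let ⟨n, hn⟩ := (M.eventually_mem_infSet x).exists
  ⟨x.take n, M.run_eq_runOn_take x n ▸ hn⟩

theorem isSCS_infSet (x : Stream' α) : IsSCS M (M.infSet x) := by
  obtain ⟨N, hN⟩ := eventually_atTop.1 (M.eventually_mem_infSet x)
  refine ⟨let ⟨_, hv⟩ := M.exists_runOn_mem_infSet x; ⟨_, hv⟩, fun q hq q' hq' => ?_⟩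
  obtain ⟨n, hn, rfl⟩ := frequently_atTop.1 hq N
  obtain ⟨n', hn', rfl⟩ := frequently_atTop.1 hq' (n + 1)
  obtain ⟨m, rfl⟩ := Nat.exists_eq_add_of_le hn'
  refine ⟨(x.drop n).take (m + 1), by simp [Stream'.take_succ], ?_,
    pathWithin_take fun j _ => ?_⟩
  · rw [← run_add_s19, Nat.add_right_comm, Nat.add_assoc]
  · rw [← run_add_s19]
    exact hN _ (by omega)

end DetAuto

section SCS

variable {α : Type} {M : DetAuto α}

theorem IsSCS.exists_pathWithin {C S : Set M.Q} (hC : IsSCS M C) (hCS : C ⊆ S) {q q' : M.Q}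
    (hq : q ∈ C) (hq' : q' ∈ C) : ∃ u, u ≠ [] ∧ M.runOn q u = q' ∧ M.PathWithin q u S :=
  let ⟨u, hu, huq', huC⟩ := hC.2 q hq q' hq'
  ⟨u, hu, huq', fun p hp => hCS (huC p hp)⟩

theorem isSCS_of_hub {S : Set M.Q} {s : M.Q} (hs : s ∈ S)
    (hto : ∀ q ∈ S, ∃ u, u ≠ [] ∧ M.runOn q u = s ∧ M.PathWithin q u S)
    (hfrom : ∀ q ∈ S, ∃ u, u ≠ [] ∧ M.runOn s u = q ∧ M.PathWithin s u S) :
    IsSCS M S := by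
  refine ⟨⟨s, hs⟩, fun q hq q' hq' => ?_⟩
  obtain ⟨u, hu, hus, huS⟩ := hto q hq
  obtain ⟨v, -, hvq', hvS⟩ := hfrom q' hq'
  exact ⟨u ++ v, by simp [hu], by rw [M.runOn_append, hus, hvq'],
    huS.append (hus ▸ hvS)⟩

theorem IsSCS.union {C D : Set M.Q} (hC : IsSCS M C) (hD : IsSCS M D) {s : M.Q}
    (hsC : s ∈ C) (hsD : s ∈ D) : IsSCS M (C ∪ D) := by
  refine isSCS_of_hub (Or.inl hsC) ?_ ?_
  · rintro q (hq | hq)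
    exacts [hC.exists_pathWithin subset_union_left hq hsC,
      hD.exists_pathWithin subset_union_right hq hsD]
  · rintro q (hq | hq)
    exacts [hC.exists_pathWithin subset_union_left hsC hq,
      hD.exists_pathWithin subset_union_right hsD hq]

theorem AcceptingSCS.of_union {c : M.Q → ℕ} {D E : Set M.Q} (h : AcceptingSCS M c (D ∪ E))
    {q : M.Q} (hq : q ∈ D) (hE : ∀ q' ∈ E, c q' ≤ c q) : AcceptingSCS M c D := by
  obtain ⟨q₁, hq₁ | hq₁, hodd, hmax⟩ := h
  · exact ⟨q₁, hq₁, hodd, fun q' hq' => hmax q' (Or.inl hq')⟩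
  · have hcq : c q₁ = c q := le_antisymm (hE q₁ hq₁) (hmax q (Or.inl hq))
    exact ⟨q, hq, hcq ▸ hodd, fun q' hq' => hcq ▸ hmax q' (Or.inl hq')⟩

end SCS

section

variable {α : Type} (M : DetAuto α)

theorem dbwRecognizable_of_acceptingSCS_of_subset (c : M.Q → ℕ) (L : Set (Stream' α))
    (hL : ∀ x, x ∈ L ↔ ParityAccept M c x)
    (H : ∀ C : Set M.Q, IsSCS M C → (∃ v : List α, M.runOn M.init v ∈ C) →
      AcceptingSCS M c C → ∀ C' : Set M.Q, IsSCS M C' → C ⊆ C' → AcceptingSCS M c C') :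
    DBWRecognizable L := by
  let F : Set M.Q := {q | ∀ D, IsSCS M D → (∃ v, M.runOn M.init v ∈ D) → q ∈ D →
    AcceptingSCS M c D}
  refine ⟨M, F, fun x => (hL x).trans ⟨fun hx => ?_, fun hx => ?_⟩⟩
  all_goals have hI := M.eventually_mem_infSet x
  · obtain ⟨q, hq, hqmax⟩ := exists_max_image (M.infSet x) c (M.infSet x).toFinite
      (let ⟨_, hn⟩ := hI.exists; ⟨_, hn⟩)
    have hodd := (M.parityAccept_iff_of_eventually_mem c hI hqmax hq).1 hx
    have hqF : q ∈ F := fun D hD _ hqD =>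
      (H _ (M.isSCS_infSet x) (M.exists_runOn_mem_infSet x) ⟨q, hq, hodd, hqmax⟩ _
        (hD.union (M.isSCS_infSet x) hqD hq) subset_union_right).of_union hqD hqmax
    exact hq.mono fun n hn => hn ▸ hqF
  · obtain ⟨n, hnF, hnI⟩ := (hx.and_eventually hI).exists
    obtain ⟨q, hq, hodd, hqmax⟩ := hnF _ (M.isSCS_infSet x) (M.exists_runOn_mem_infSet x) hnI
    exact (M.parityAccept_iff_of_eventually_mem c hI hqmax hq).2 hodd

end

section

variable {α : Type} (M : DetAuto α) (c : M.Q → ℕ) {N : DetAuto α} {acc : Set N.Q}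

theorem odd_of_lasso (hN : ∀ x, ParityAccept M c x ↔ ∃ᶠ n in atTop, N.run x n ∈ acc)
    {g w : List α} (hw : w ≠ []) {D : Set M.Q} {q : M.Q}
    (hMloop : M.runOn (M.runOn M.init g) w = M.runOn M.init g)
    (hNloop : N.runOn (N.runOn N.init g) w = N.runOn N.init g)
    (hwD : M.PathWithin (M.runOn M.init g) w D) (hwq : M.PathVisits (M.runOn M.init g) w {q})
    (hqD : ∀ q' ∈ D, c q' ≤ c q) (hwacc : N.PathVisits (N.runOn N.init g) w acc) :
    Odd (c q) :=
  (M.parityAccept_iff_of_eventually_mem c (DetAuto.eventually_run_lasso_mem hw hMloop hwD) hqD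
    (DetAuto.frequently_run_lasso_mem hw hMloop hwq)).1
    ((hN _).2 (DetAuto.frequently_run_lasso_mem hw hNloop hwacc))

theorem exists_pathWithin_pathVisits_acc
    (hN : ∀ x, ParityAccept M c x ↔ ∃ᶠ n in atTop, N.run x n ∈ acc)
    {C : Set M.Q} (hC : IsSCS M C) {qc : M.Q} (hqc : qc ∈ C) (hodd : Odd (c qc))
    (hmax : ∀ q ∈ C, c q ≤ c qc) {g : List α} (hg : M.runOn M.init g = qc) :
    ∃ t, M.PathWithin qc t C ∧ N.PathVisits (N.runOn N.init g) t acc := by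
  -- the lasso `g ℓ^ω` along a loop `ℓ` at `qc` inside `C` is parity-accepting,
  -- hence accepted by `N`
  obtain ⟨ℓ, hℓ, hloop, hℓC⟩ := hC.exists_pathWithin subset_rfl hqc hqc
  subst hg
  have hy := (M.parityAccept_iff_of_eventually_mem c
    (DetAuto.eventually_run_lasso_mem hℓ hloop hℓC) hmax
    (DetAuto.frequently_run_lasso_mem (S := {_}) hℓ hloop ⟨[], List.nil_prefix, rfl⟩)).2 hodd
  obtain ⟨n, hn, hacc⟩ := frequently_atTop.1 ((hN _).1 hy) g.length
  obtain ⟨m, rfl⟩ := Nat.exists_eq_add_of_le hn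
  rw [DetAuto.run_appendStream] at hacc
  exact ⟨_, hℓC.take_cycle hℓ hloop m, _, List.prefix_refl _, hacc⟩

theorem acceptingSCS_of_subset_of_buchi
    (hN : ∀ x, ParityAccept M c x ↔ ∃ᶠ n in atTop, N.run x n ∈ acc)
    {C C' : Set M.Q} (hC : IsSCS M C) (hreach : ∃ v, M.runOn M.init v ∈ C)
    (hCacc : AcceptingSCS M c C) (hC' : IsSCS M C') (hCC' : C ⊆ C') : AcceptingSCS M c C' := by
  obtain ⟨q', hq', hq'max⟩ := exists_max_image C' c C'.toFinite hC'.1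
  refine ⟨q', hq', ?_, hq'max⟩
  obtain ⟨qc, hqc, hodd, hmax⟩ := hCacc
  let P : Set N.Q := {r | ∃ g, M.runOn M.init g = qc ∧ N.runOn N.init g = r}
  let R (r r' : N.Q) : Prop := ∃ w, w ≠ [] ∧ M.runOn qc w = qc ∧ M.PathWithin qc w C' ∧
    M.PathVisits qc w {q'} ∧ N.runOn r w = r' ∧ N.PathVisits r w acc
  have hR : ∀ r₁ r₂ r₃, R r₁ r₂ → R r₂ r₃ → R r₁ r₃ := by
    rintro _ _ _ ⟨u, hu, huM, huC', huq', rfl, huacc⟩ ⟨v, -, hvM, hvC', -, rfl, -⟩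
    exact ⟨u ++ v, by simp [hu], by rw [M.runOn_append, huM, hvM], huC'.append (by rwa [huM]),
      huq'.append_right v, N.runOn_append .., huacc.append_right v⟩
  have hP : P.Nonempty := by
    obtain ⟨v, hv⟩ := hreach
    obtain ⟨u, -, hu, -⟩ := hC.exists_pathWithin subset_rfl hv hqc
    exact ⟨_, v ++ u, by rw [M.runOn_append, hu], rfl⟩
  have hstep : ∀ r ∈ P, ∃ r' ∈ P, R r r' := by
    rintro _ ⟨g, hg, rfl⟩
    obtain ⟨t, htC, htacc⟩ := exists_pathWithin_pathVisits_acc M c hN hC hqc hodd hmax hg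
    obtain ⟨w₁, hw₁, hw₁q', hw₁C'⟩ :=
      hC'.exists_pathWithin subset_rfl (hCC' (htC t (List.prefix_refl t))) hq'
    obtain ⟨w₂, -, hw₂qc, hw₂C'⟩ := hC'.exists_pathWithin subset_rfl hq' (hCC' hqc)
    have hw : M.runOn qc (t ++ (w₁ ++ w₂)) = qc := by
      rw [M.runOn_append, M.runOn_append, hw₁q', hw₂qc]
    exact ⟨_, ⟨g ++ (t ++ (w₁ ++ w₂)), by rw [M.runOn_append, hg, hw], rfl⟩,
      t ++ (w₁ ++ w₂), by simp [hw₁], hw,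
      (htC.mono hCC').append (hw₁C'.append (hw₁q' ▸ hw₂C')),
      .append_left t (.append_right ⟨w₁, List.prefix_refl _, hw₁q'⟩ w₂),
      (N.runOn_append ..).symm, htacc.append_right _⟩
  obtain ⟨_, ⟨g, rfl, rfl⟩, w, hw, hwM, hwC', hwq', hwN, hwacc⟩ :=
    exists_rel_self_of_forall_exists_rel hR hP hstep
  exact odd_of_lasso M c hN hw hwM hwN hwC' hwq' hq'max hwacc

end

theorem stmt_19_general {Sig : Type} (M : DetAuto Sig) (c : M.Q → ℕ)
    (L : Set (ℕ → Sig)) (hL : ∀ x, x ∈ L ↔ ParityAccept M c x) :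
    DBWRecognizable L ↔
      ∀ C : Set M.Q, IsSCS M C → (∃ v : List Sig, M.runOn M.init v ∈ C) →
        AcceptingSCS M c C →
        ∀ C' : Set M.Q, IsSCS M C' → C ⊆ C' → AcceptingSCS M c C' := by
  refine ⟨?_, dbwRecognizable_of_acceptingSCS_of_subset M c L hL⟩
  rintro ⟨N, acc, hNL⟩ C hC hreach hCacc C' hC' hCC'
  exact acceptingSCS_of_subset_of_buchi M c (fun x => (hL x).symm.trans (hNL x))
    hC hreach hCacc hC' hCC'

/-- The language of a DPW is DBW-recognizable iff every SCS `C'` containing a reachable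
accepting SCS `C` is itself accepting. -/
theorem stmt_19 {Sig : Type} [Fintype Sig] (M : DetAuto Sig) (c : M.Q → ℕ)
    (L : Set (ℕ → Sig)) (hL : ∀ x, x ∈ L ↔ ParityAccept M c x) :
    DBWRecognizable L ↔
      ∀ C : Set M.Q, IsSCS M C → (∃ v : List Sig, M.runOn M.init v ∈ C) →
        AcceptingSCS M c C →
        ∀ C' : Set M.Q, IsSCS M C' → C ⊆ C' → AcceptingSCS M c C' :=
  stmt_19_general M c L hL
end
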